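/- In dimension D = 1, fix a > ε > 0, let f̂(x) = (1/(4ε))·1_{[a−ε, a+ε]}(x) + (1/(4ε))·1_{[−a−ε, −a+ε]}(x), let μ̂ = f̂·Leb, let Ŝ = [−a−ε, a+ε], and let f̂_β = f̂ * g_β be the Gaussian smoothing with g_β(z) = (2πβ)^{−1/2} e^{−z²/(2β)}. Then f̂_β(a) ≥ (1/2)·g_β(ε), f̂_β(0) ≤ g_β(a−ε), hence 𝔯_Ŝ(μ̂_β) ≥ f̂_β(a)/f̂_β(0) ≥ (1/2)·exp(((a−ε)² − ε²)/(2β)); and for every 0 < β ≤ β₀ := ((a−ε)² − ε²)/(4 log 2) one has 𝔯_Ŝ(μ̂_β) ≥ exp(((a−ε)² − ε²)/(4β)). In particular the exponential dependence on β^{−1} in the Gaussian density-regularity bound 𝔯_S(μ_β) ≤ e^{M(S,K)/(2β)} is sharp. -/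

import Mathlib

open MeasureTheory Metric Set
open scoped ENNReal NNReal

noncomputable section

/-- The one-dimensional centered Gaussian kernel of variance `β`:
`g_β(z) = (2πβ)^{-1/2} exp(-z²/(2β))`. -/
noncomputable def gk (β z : ℝ) : ℝ :=
  (2 * Real.pi * β) ^ (-(1:ℝ) / 2) * Real.exp (-z ^ 2 / (2 * β))

/-- Density regularity of a density on a set `S ⊆ ℝ`: essential supremum over
essential infimum w.r.t. Lebesgue measure restricted to `S`. -/
noncomputable def densReg (f : ℝ → ℝ≥0∞) (S : Set ℝ) : ℝ≥0∞ :=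
  essSup f (volume.restrict S) / essInf f (volume.restrict S)

lemma gk_pos {β : ℝ} (hβ : 0 < β) (z : ℝ) : 0 < gk β z := by
  have h2 : 0 < 2 * Real.pi * β := by positivity
  unfold gk
  positivity

lemma gk_anti {β : ℝ} (hβ : 0 < β) {u z : ℝ} (h : u ^ 2 ≤ z ^ 2) : gk β z ≤ gk β u := by
  unfold gk
  have hC : (0:ℝ) ≤ (2 * Real.pi * β) ^ (-(1:ℝ) / 2) := by
    have : 0 < 2 * Real.pi * β := by positivity
    positivity
  apply mul_le_mul_of_nonneg_left _ hC
  apply Real.exp_le_exp.2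
  exact div_le_div_of_nonneg_right (by linarith) (by linarith) |>.trans_eq rfl

lemma gk_continuous (β : ℝ) : Continuous (gk β) := by
  unfold gk
  exact continuous_const.mul (Real.continuous_exp.comp ((continuous_pow 2).neg.div_const _))

lemma essSup_ofReal_lower {h : ℝ → ℝ} (hc : Continuous h) {S : Set ℝ} {x₀ r : ℝ}
    (hr : 0 < r) (hball : ball x₀ r ⊆ S) :
    ENNReal.ofReal (h x₀) ≤ essSup (fun x => ENNReal.ofReal (h x)) (volume.restrict S) := by
  set μ := volume.restrict S with hμ
  set c := essSup (fun x => ENNReal.ofReal (h x)) μ with hc'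
  by_contra hlt
  push_neg at hlt
  have hVopen : IsOpen {y : ℝ | c < ENNReal.ofReal (h y)} :=
    isOpen_lt continuous_const (ENNReal.continuous_ofReal.comp hc)
  have hx₀ : x₀ ∈ {y : ℝ | c < ENNReal.ofReal (h y)} := hlt
  have hpos : 0 < volume ({y : ℝ | c < ENNReal.ofReal (h y)} ∩ ball x₀ r) :=
    (hVopen.inter isOpen_ball).measure_pos volume ⟨x₀, hx₀, mem_ball_self hr⟩
  have hnull : μ {y : ℝ | c < ENNReal.ofReal (h y)} = 0 := by
    have hae := ae_le_essSup (f := fun x => ENNReal.ofReal (h x)) (μ := μ)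
    rw [ae_iff] at hae
    simpa [not_le] using hae
  rw [hμ, Measure.restrict_apply hVopen.measurableSet] at hnull
  have hz : volume ({y : ℝ | c < ENNReal.ofReal (h y)} ∩ ball x₀ r) = 0 :=
    measure_mono_null (inter_subset_inter_right _ hball) hnull
  exact hpos.ne' hz

lemma essInf_ofReal_upper {h : ℝ → ℝ} (hc : Continuous h) {S : Set ℝ} {x₀ r : ℝ}
    (hr : 0 < r) (hball : ball x₀ r ⊆ S) :
    essInf (fun x => ENNReal.ofReal (h x)) (volume.restrict S) ≤ ENNReal.ofReal (h x₀) := by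
  set μ := volume.restrict S with hμ
  set c := essInf (fun x => ENNReal.ofReal (h x)) μ with hc'
  by_contra hlt
  push_neg at hlt
  have hVopen : IsOpen {y : ℝ | ENNReal.ofReal (h y) < c} :=
    isOpen_lt (ENNReal.continuous_ofReal.comp hc) continuous_const
  have hx₀ : x₀ ∈ {y : ℝ | ENNReal.ofReal (h y) < c} := hlt
  have hpos : 0 < volume ({y : ℝ | ENNReal.ofReal (h y) < c} ∩ ball x₀ r) :=
    (hVopen.inter isOpen_ball).measure_pos volume ⟨x₀, hx₀, mem_ball_self hr⟩
  have hnull : μ {y : ℝ | ENNReal.ofReal (h y) < c} = 0 := by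
    have hae := ae_essInf_le (f := fun x => ENNReal.ofReal (h x)) (μ := μ)
    rw [ae_iff] at hae
    simpa [not_le] using hae
  rw [hμ, Measure.restrict_apply hVopen.measurableSet] at hnull
  have hz : volume ({y : ℝ | ENNReal.ofReal (h y) < c} ∩ ball x₀ r) = 0 :=
    measure_mono_null (inter_subset_inter_right _ hball) hnull
  exact hpos.ne' hz

theorem gaussian_density_regularity_lower_bound_sharp
    (a ε : ℝ) (hε : 0 < ε) (haε : ε < a)
    (fhat : ℝ → ℝ)
    (hfhat : fhat = fun x => (4 * ε)⁻¹ *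
      ((Icc (a - ε) (a + ε)).indicator (fun _ => (1:ℝ)) x +
       (Icc (-a - ε) (-a + ε)).indicator (fun _ => (1:ℝ)) x))
    (Shat : Set ℝ) (hShat : Shat = Icc (-a - ε) (a + ε))
    (β : ℝ) (hβ : 0 < β)
    (fβ : ℝ → ℝ) (hfβ : fβ = fun x => ∫ y, fhat y * gk β (x - y)) :
    (1 / 2) * gk β ε ≤ fβ a ∧
    fβ 0 ≤ gk β (a - ε) ∧
    ENNReal.ofReal (fβ a / fβ 0) ≤ densReg (fun x => ENNReal.ofReal (fβ x)) Shat ∧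
    ENNReal.ofReal ((1 / 2) * Real.exp (((a - ε) ^ 2 - ε ^ 2) / (2 * β)))
      ≤ densReg (fun x => ENNReal.ofReal (fβ x)) Shat ∧
    (β ≤ ((a - ε) ^ 2 - ε ^ 2) / (4 * Real.log 2) →
      ENNReal.ofReal (Real.exp (((a - ε) ^ 2 - ε ^ 2) / (4 * β)))
        ≤ densReg (fun x => ENNReal.ofReal (fβ x)) Shat) := by
  have ha : 0 < a := hε.trans haε
  have hcg : ∀ x : ℝ, Continuous fun y => gk β (x - y) :=
    fun x => (gk_continuous β).comp (continuous_const.sub continuous_id)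
  have hIO1 : ∀ x : ℝ, IntegrableOn (fun y => gk β (x - y)) (Icc (a - ε) (a + ε)) :=
    fun x => (hcg x).integrableOn_Icc
  have hIO2 : ∀ x : ℝ, IntegrableOn (fun y => gk β (x - y)) (Icc (-a - ε) (-a + ε)) :=
    fun x => (hcg x).integrableOn_Icc
  -- representation of fβ
  have hrep : ∀ x : ℝ, fβ x = (4 * ε)⁻¹ *
      ((∫ y in Icc (a - ε) (a + ε), gk β (x - y)) +
       ∫ y in Icc (-a - ε) (-a + ε), gk β (x - y)) := by
    intro x
    simp only [hfβ, hfhat]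
    have e : ∀ y : ℝ, ((4 * ε)⁻¹ *
        ((Icc (a - ε) (a + ε)).indicator (fun _ => (1:ℝ)) y +
         (Icc (-a - ε) (-a + ε)).indicator (fun _ => (1:ℝ)) y)) * gk β (x - y)
        = (4 * ε)⁻¹ * ((Icc (a - ε) (a + ε)).indicator (fun y => gk β (x - y)) y
            + (Icc (-a - ε) (-a + ε)).indicator (fun y => gk β (x - y)) y) := by
      intro y
      by_cases h1 : y ∈ Icc (a - ε) (a + ε) <;> by_cases h2 : y ∈ Icc (-a - ε) (-a + ε) <;>
        simp [Set.indicator_of_mem, Set.indicator_of_notMem, h1, h2] <;> ring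
    simp only [e]
    rw [integral_const_mul,
      integral_add ((hIO1 x).integrable_indicator measurableSet_Icc)
        ((hIO2 x).integrable_indicator measurableSet_Icc),
      integral_indicator measurableSet_Icc, integral_indicator measurableSet_Icc]
  have vol1 : (volume (Icc (a - ε) (a + ε))).toReal = 2 * ε := by
    rw [Real.volume_Icc, show a + ε - (a - ε) = 2 * ε by ring,
      ENNReal.toReal_ofReal (by positivity)]
  have vol2 : (volume (Icc (-a - ε) (-a + ε))).toReal = 2 * ε := by
    rw [Real.volume_Icc, show -a + ε - (-a - ε) = 2 * ε by ring,
      ENNReal.toReal_ofReal (by positivity)]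
  -- claim 1
  have h1 : gk β ε * (2 * ε) ≤ ∫ y in Icc (a - ε) (a + ε), gk β (a - y) := by
    have hmono : ∫ y in Icc (a - ε) (a + ε), gk β ε ≤
        ∫ y in Icc (a - ε) (a + ε), gk β (a - y) := by
      apply setIntegral_mono_on (integrableOn_const measure_Icc_lt_top.ne) (hIO1 a)
        measurableSet_Icc
      intro y hy
      exact gk_anti hβ (sq_le_sq' (by linarith [hy.2]) (by linarith [hy.1]))
    calc gk β ε * (2 * ε) = ∫ y in Icc (a - ε) (a + ε), gk β ε := by
          rw [setIntegral_const, measureReal_def, vol1, smul_eq_mul]; ring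
      _ ≤ _ := hmono
  have h2 : (0:ℝ) ≤ ∫ y in Icc (-a - ε) (-a + ε), gk β (a - y) :=
    setIntegral_nonneg measurableSet_Icc fun y _ => (gk_pos hβ _).le
  have claim1 : (1 / 2) * gk β ε ≤ fβ a := by
    rw [hrep a]
    calc (1 / 2) * gk β ε = (4 * ε)⁻¹ * (gk β ε * (2 * ε) + 0) := by
          field_simp; ring
      _ ≤ _ := mul_le_mul_of_nonneg_left (add_le_add h1 h2) (by positivity)
  -- claim 2
  have g1 : ∫ y in Icc (a - ε) (a + ε), gk β (0 - y) ≤ gk β (a - ε) * (2 * ε) := by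
    have hmono : ∫ y in Icc (a - ε) (a + ε), gk β (0 - y) ≤
        ∫ y in Icc (a - ε) (a + ε), gk β (a - ε) := by
      apply setIntegral_mono_on (hIO1 0) (integrableOn_const measure_Icc_lt_top.ne)
        measurableSet_Icc
      intro y hy
      exact gk_anti hβ (by nlinarith [hy.1])
    calc _ ≤ ∫ y in Icc (a - ε) (a + ε), gk β (a - ε) := hmono
      _ = gk β (a - ε) * (2 * ε) := by rw [setIntegral_const, measureReal_def, vol1, smul_eq_mul]; ring
  have g2 : ∫ y in Icc (-a - ε) (-a + ε), gk β (0 - y) ≤ gk β (a - ε) * (2 * ε) := by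
    have hmono : ∫ y in Icc (-a - ε) (-a + ε), gk β (0 - y) ≤
        ∫ y in Icc (-a - ε) (-a + ε), gk β (a - ε) := by
      apply setIntegral_mono_on (hIO2 0) (integrableOn_const measure_Icc_lt_top.ne)
        measurableSet_Icc
      intro y hy
      exact gk_anti hβ (by nlinarith [hy.2])
    calc _ ≤ ∫ y in Icc (-a - ε) (-a + ε), gk β (a - ε) := hmono
      _ = gk β (a - ε) * (2 * ε) := by rw [setIntegral_const, measureReal_def, vol2, smul_eq_mul]; ring
  have claim2 : fβ 0 ≤ gk β (a - ε) := by
    rw [hrep 0]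
    calc (4 * ε)⁻¹ * ((∫ y in Icc (a - ε) (a + ε), gk β (0 - y)) +
          ∫ y in Icc (-a - ε) (-a + ε), gk β (0 - y))
        ≤ (4 * ε)⁻¹ * (gk β (a - ε) * (2 * ε) + gk β (a - ε) * (2 * ε)) :=
          mul_le_mul_of_nonneg_left (add_le_add g1 g2) (by positivity)
      _ = gk β (a - ε) := by field_simp; ring
  -- continuity of fβ
  have hfhatInt : Integrable fhat := by
    rw [hfhat]
    apply Integrable.const_mul
    exact ((integrable_indicator_iff measurableSet_Icc).2
        (integrableOn_const measure_Icc_lt_top.ne)).add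
      ((integrable_indicator_iff measurableSet_Icc).2
        (integrableOn_const measure_Icc_lt_top.ne))
  have hbdd : BddAbove (Set.range fun z => ‖gk β z‖) := by
    refine ⟨(2 * Real.pi * β) ^ (-(1:ℝ) / 2), ?_⟩
    rintro _ ⟨z, rfl⟩
    show ‖gk β z‖ ≤ _
    rw [Real.norm_eq_abs, abs_of_pos (gk_pos hβ z)]
    unfold gk
    have hC : (0:ℝ) < (2 * Real.pi * β) ^ (-(1:ℝ) / 2) := by
      have : 0 < 2 * Real.pi * β := by positivity
      positivity
    nth_rewrite 2 [← mul_one ((2 * Real.pi * β) ^ (-(1:ℝ) / 2))]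
    apply mul_le_mul_of_nonneg_left _ hC.le
    calc Real.exp (-z ^ 2 / (2 * β)) ≤ Real.exp 0 :=
          Real.exp_le_exp.2 (div_nonpos_of_nonpos_of_nonneg (by nlinarith) (by linarith))
      _ = 1 := Real.exp_zero
  have hcont : Continuous fβ := by
    have hconv := hbdd.continuous_convolution_right_of_integrable
      (ContinuousLinearMap.lsmul ℝ ℝ) hfhatInt (gk_continuous β)
    rw [hfβ]
    exact hconv
  -- essSup / essInf bounds
  have hballa : ball a ε ⊆ Shat := by
    rw [hShat, Real.ball_eq_Ioo]
    exact Set.Ioo_subset_Icc_self.trans (Set.Icc_subset_Icc (by linarith) (by linarith))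
  have hball0 : ball 0 ε ⊆ Shat := by
    rw [hShat, Real.ball_eq_Ioo]
    exact Set.Ioo_subset_Icc_self.trans (Set.Icc_subset_Icc (by linarith) (by linarith))
  have hSup : ENNReal.ofReal (fβ a) ≤
      essSup (fun x => ENNReal.ofReal (fβ x)) (volume.restrict Shat) :=
    essSup_ofReal_lower hcont hε hballa
  have hInf : essInf (fun x => ENNReal.ofReal (fβ x)) (volume.restrict Shat) ≤
      ENNReal.ofReal (fβ 0) :=
    essInf_ofReal_upper hcont hε hball0
  have hfa_pos : 0 < fβ a := lt_of_lt_of_le (by have := gk_pos hβ ε; linarith) claim1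
  -- claim 3
  have claim3 : ENNReal.ofReal (fβ a / fβ 0) ≤ densReg (fun x => ENNReal.ofReal (fβ x)) Shat := by
    rcases le_or_gt (fβ 0) 0 with h0 | h0
    · have hd : fβ a / fβ 0 ≤ 0 := div_nonpos_iff.2 (Or.inl ⟨hfa_pos.le, h0⟩)
      simp [ENNReal.ofReal_eq_zero.2 hd]
    · rw [ENNReal.ofReal_div_of_pos h0]
      exact ENNReal.div_le_div hSup hInf
  -- claim 4
  have hCpos : (0:ℝ) < (2 * Real.pi * β) ^ (-(1:ℝ) / 2) := by
    have : 0 < 2 * Real.pi * β := by positivity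
    positivity
  have hratio : (1 / 2) * gk β ε / gk β (a - ε)
      = (1 / 2) * Real.exp (((a - ε) ^ 2 - ε ^ 2) / (2 * β)) := by
    unfold gk
    rw [mul_div_assoc]
    congr 1
    rw [mul_div_mul_left _ _ hCpos.ne', ← Real.exp_sub]
    congr 1
    ring
  have claim4 : ENNReal.ofReal ((1 / 2) * Real.exp (((a - ε) ^ 2 - ε ^ 2) / (2 * β)))
      ≤ densReg (fun x => ENNReal.ofReal (fβ x)) Shat := by
    rw [← hratio, ENNReal.ofReal_div_of_pos (gk_pos hβ _)]
    exact ENNReal.div_le_div ((ENNReal.ofReal_le_ofReal claim1).trans hSup)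
      (hInf.trans (ENNReal.ofReal_le_ofReal claim2))
  refine ⟨claim1, claim2, claim3, claim4, ?_⟩
  -- claim 5
  intro hb
  have hlog2 : 0 < Real.log 2 := Real.log_pos one_lt_two
  have hb' : β * (4 * Real.log 2) ≤ (a - ε) ^ 2 - ε ^ 2 :=
    (le_div_iff₀ (by positivity)).1 hb
  have hΔ4 : Real.log 2 ≤ ((a - ε) ^ 2 - ε ^ 2) / (4 * β) := by
    rw [le_div_iff₀ (by positivity)]
    nlinarith
  have h2e : (2:ℝ) ≤ Real.exp (((a - ε) ^ 2 - ε ^ 2) / (4 * β)) := by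
    calc (2:ℝ) = Real.exp (Real.log 2) := (Real.exp_log two_pos).symm
      _ ≤ _ := Real.exp_le_exp.2 hΔ4
  have hhalf : Real.exp (((a - ε) ^ 2 - ε ^ 2) / (4 * β))
      ≤ (1 / 2) * Real.exp (((a - ε) ^ 2 - ε ^ 2) / (2 * β)) := by
    have hsplit : Real.exp (((a - ε) ^ 2 - ε ^ 2) / (2 * β))
        = Real.exp (((a - ε) ^ 2 - ε ^ 2) / (4 * β)) *
          Real.exp (((a - ε) ^ 2 - ε ^ 2) / (4 * β)) := by
      rw [← Real.exp_add]
      congr 1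
      field_simp
      ring
    rw [hsplit]
    nlinarith [Real.exp_pos (((a - ε) ^ 2 - ε ^ 2) / (4 * β))]
  exact le_trans (ENNReal.ofReal_le_ofReal hhalf) claim4
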